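/- arXiv:2003.07909 — 3 statements merged into one kernel-verified Lean document; each statement's English description precedes it below -/
import Mathlib

section
/- For two indecomposable nilpotent representations U_i(ℓ) and U_j(k) of the equioriented cycle on n vertices, the dimension of the space of morphisms from U_i(ℓ) to U_j(k) equals the number of occurrences of the residue j+k-1 (mod n) among the residues i, i+1, ..., i+m-1 (mod n), where m = min(ℓ,k). -/
open Module

/-- A representation of the equioriented cycle quiver `Δ_n` on vertex set `ZMod n`,
with arrows `i → i+1`. -/
structure CycRep (n : ℕ) where
  V : ZMod n → Type
  [acg : ∀ i, AddCommGroup (V i)]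
  [mod : ∀ i, Module ℂ (V i)]
  f : ∀ i, V i →ₗ[ℂ] V (i + 1)

attribute [instance] CycRep.acg CycRep.mod

/-- The space of morphisms of representations of the cycle, as a submodule of the
product of the spaces of linear maps over each vertex. -/
def CycRep.homSubmodule {n : ℕ} (U W : CycRep n) :
    Submodule ℂ (∀ i, U.V i →ₗ[ℂ] W.V i) where
  carrier := {φ | ∀ i, (W.f i).comp (φ i) = (φ (i + 1)).comp (U.f i)}
  add_mem' := by
    intro a b ha hb i
    simp only [Pi.add_apply, LinearMap.comp_add, LinearMap.add_comp, ha i, hb i]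
  zero_mem' := by
    intro i
    simp
  smul_mem' := by
    intro c a ha i
    simp only [Pi.smul_apply, LinearMap.comp_smul, LinearMap.smul_comp, ha i]

/-- `dim Hom(U, W)` for representations of the cycle. -/
noncomputable def CycRep.homDim {n : ℕ} (U W : CycRep n) : ℕ :=
  Module.finrank ℂ (U.homSubmodule W)

/-- The dimension vector. -/
noncomputable def CycRep.dimVec {n : ℕ} (U : CycRep n) (i : ZMod n) : ℕ :=
  Module.finrank ℂ (U.V i)

/-- Isomorphism of representations of the cycle. -/
def CycRep.Iso {n : ℕ} (U W : CycRep n) : Prop :=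
  ∃ φ : ∀ i, U.V i ≃ₗ[ℂ] W.V i, ∀ (i) (v : U.V i), φ (i + 1) (U.f i v) = W.f i (φ i v)

/-- Direct sum of a (finite) family of representations of the cycle. -/
def CycRep.dSum {n : ℕ} {ι : Type} (F : ι → CycRep n) : CycRep n where
  V i := ∀ a, (F a).V i
  f i := LinearMap.pi fun a => ((F a).f i).comp (LinearMap.proj a)

/-- Binary direct sum. -/
def CycRep.dsum2 {n : ℕ} (U W : CycRep n) : CycRep n where
  V i := U.V i × W.V i
  f i := (U.f i).prodMap (W.f i)

/-- The subrepresentation determined by a stable tuple of subspaces. -/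
def CycRep.subRep {n : ℕ} (M : CycRep n) (W : ∀ i, Submodule ℂ (M.V i))
    (h : ∀ i, (W i).map (M.f i) ≤ W (i + 1)) : CycRep n where
  V i := W i
  f i := (M.f i).restrict fun x hx => h i (Submodule.mem_map_of_mem hx)

/-- Transport along an equality of vertices. -/
def CycRep.castV {n : ℕ} (U : CycRep n) {i j : ZMod n} (h : i = j) :
    U.V i →ₗ[ℂ] U.V j := h ▸ LinearMap.id

/-- The composite linear map along the unique path of length `N` starting at vertex `i`. -/
noncomputable def CycRep.pathMap {n : ℕ} (U : CycRep n) :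
    (N : ℕ) → (i : ZMod n) → (U.V i →ₗ[ℂ] U.V (i + (N : ZMod n)))
  | 0, i => U.castV (by simp)
  | (N + 1), i =>
      (U.castV (show i + 1 + (N : ZMod n) = i + ((N + 1 : ℕ) : ZMod n) by
        push_cast; ring)) ∘ₗ (U.pathMap N (i + 1)) ∘ₗ U.f i

/-- The indecomposable nilpotent representation `U_i(ℓ)` of the cycle: basis vectors
`b_0, …, b_{ℓ-1}`, `b_t` over vertex `i + t`, arrows sending `b_t ↦ b_{t+1}`, `b_{ℓ-1} ↦ 0`. -/
noncomputable def stdRep (n : ℕ) (i : ZMod n) (ℓ : ℕ) : CycRep n where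
  V j := {t : Fin ℓ // i + (t.1 : ZMod n) = j} → ℂ
  f j :=
    { toFun := fun g s =>
        if h : s.1.1 ≠ 0 then
          g ⟨⟨s.1.1 - 1, by have := s.1.isLt; omega⟩, by
            have hs := s.2
            have h1 : (1 : ℕ) ≤ s.1.1 := Nat.one_le_iff_ne_zero.mpr h
            have hc : ((s.1.1 - 1 : ℕ) : ZMod n) = (s.1.1 : ZMod n) - 1 := by
              rw [Nat.cast_sub h1, Nat.cast_one]
            rw [hc]
            linear_combination hs⟩
        else 0
      map_add' := by
        intro a b
        funext s
        by_cases h : s.1.1 = 0 <;> simp [h]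
      map_smul' := by
        intro c a
        funext s
        by_cases h : s.1.1 = 0 <;> simp [h] }

/-- `U(j; ℓ)`: the indecomposable nilpotent representation of length `ℓ` ending at vertex `j`. -/
noncomputable def endRep (n : ℕ) (ℓ : ℕ) (j : ZMod n) : CycRep n :=
  stdRep n (j - (ℓ : ZMod n) + 1) ℓ

/-- `⊕_{i} U_i(N)^{x_i}`. -/
noncomputable def repX (n N : ℕ) (x : ZMod n → ℕ) : CycRep n :=
  CycRep.dSum fun p : Σ i : ZMod n, Fin (x i) => stdRep n p.1 N

/-! `U_i(ℓ)` is cyclic, generated by `b₀` subject only to `f^ℓ b₀ = 0`, so a morphism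
`φ : U_i(ℓ) → U_j(k)` is determined by `w = φ_i(b₀)`, and `w` can be any vector over vertex `i`
with `f^ℓ w = 0`. In `U_j(k)` these are the combinations of the `b'_s` over vertex `i` with
`s + ℓ ≥ k`; each such `b'_s` is attained by the morphism `b_t ↦ b'_{s+t}`. Substituting
`t = k - 1 - s` turns the count of these `s` into the stated one. -/

theorem CycRep.f_apply_of_mem_homSubmodule {n : ℕ} {U W : CycRep n} {φ : ∀ v, U.V v →ₗ[ℂ] W.V v}
    (hφ : φ ∈ U.homSubmodule W) (v : ZMod n) (x : U.V v) :
    W.f v (φ v x) = φ (v + 1) (U.f v x) :=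
  LinearMap.congr_fun (hφ v) x

theorem Nat.cast_pred_sub {R : Type*} [AddCommGroupWithOne R] {s k : ℕ} (h : s < k) :
    ((k - 1 - s : ℕ) : R) = k - 1 - s := by
  rw [Nat.sub_sub, Nat.cast_sub (by omega), Nat.cast_add, Nat.cast_one, ← sub_sub]

namespace stdRep

variable {n : ℕ} {i : ZMod n} {ℓ : ℕ} {v : ZMod n}

/-- The coefficient of `b_t`; it is `0` when `t ≥ ℓ` or `b_t` does not lie over `v`. -/
noncomputable def coord (t : ℕ) : (stdRep n i ℓ).V v →ₗ[ℂ] ℂ :=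
  if h : t < ℓ ∧ i + t = v then LinearMap.proj ⟨⟨t, h.1⟩, h.2⟩ else 0

noncomputable def single (t : {t : Fin ℓ // i + t = v}) : (stdRep n i ℓ).V v :=
  Pi.single t 1

variable (i ℓ) in
noncomputable def basis (v : ZMod n) : Basis {t : Fin ℓ // i + t = v} ℂ ((stdRep n i ℓ).V v) :=
  Pi.basisFun ℂ _

theorem basis_apply (t : {t : Fin ℓ // i + t = v}) : basis i ℓ v t = single t :=
  Pi.basisFun_apply ℂ _ t

noncomputable def gen (hℓ : 0 < ℓ) : (stdRep n i ℓ).V i :=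
  single ⟨⟨0, hℓ⟩, by simp⟩

theorem coord_apply (t : ℕ) (g : (stdRep n i ℓ).V v) :
    coord t g = if h : t < ℓ ∧ i + t = v then g ⟨⟨t, h.1⟩, h.2⟩ else 0 := by
  by_cases h : t < ℓ ∧ i + t = v <;> simp [coord, h]; rfl

@[simp]
theorem coord_val (g : (stdRep n i ℓ).V v) (t : {t : Fin ℓ // i + t = v}) :
    coord t.1.1 g = g t := by
  simp [coord_apply, t.1.2, t.2]

theorem ext_coord {g g' : (stdRep n i ℓ).V v} (h : ∀ t, coord t g = coord t g') : g = g' :=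
  funext fun t => by simpa using h t.1.1

theorem coord_single (s : ℕ) (t : {t : Fin ℓ // i + t = v}) :
    coord s (single t : (stdRep n i ℓ).V v) = if s = t.1.1 then 1 else 0 := by
  rw [coord_apply]
  split_ifs with h1 h2 h2
  · simp [single, h2]
  · simp [single, Subtype.ext_iff, Fin.ext_iff, h2]
  · exact absurd ⟨h2 ▸ t.1.2, h2 ▸ t.2⟩ h1
  · rfl

theorem coord_gen (hℓ : 0 < ℓ) (s : ℕ) :
    coord s (gen hℓ : (stdRep n i ℓ).V i) = if s = 0 then 1 else 0 :=
  coord_single s _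

theorem coord_f (s : ℕ) (g : (stdRep n i ℓ).V v) :
    coord s ((stdRep n i ℓ).f v g) = if 0 < s ∧ s < ℓ then coord (s - 1) g else 0 := by
  rw [coord_apply]
  by_cases hs : 0 < s ∧ s < ℓ
  · have hv : i + s = v + 1 ↔ i + ↑(s - 1) = v := by
      rw [Nat.cast_sub hs.1, Nat.cast_one, add_sub_assoc', sub_eq_iff_eq_add]
    rw [if_pos hs, coord_apply]
    by_cases hsv : i + ↑(s - 1) = v
    · rw [dif_pos ⟨hs.2, hv.2 hsv⟩, dif_pos ⟨by omega, hsv⟩]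
      exact dif_pos hs.1.ne'
    · rw [dif_neg fun h => hsv (hv.1 h.2), dif_neg fun h => hsv h.2]
  · rw [if_neg hs]
    split_ifs with h
    · exact dif_neg fun h0 => hs ⟨Nat.pos_of_ne_zero h0, h.1⟩
    · rfl

theorem f_single_of_lt {t : ℕ} (ht : t + 1 < ℓ) :
    (stdRep n i ℓ).f (i + t) (single ⟨⟨t, by omega⟩, rfl⟩) =
      single ⟨⟨t + 1, ht⟩, by push_cast; ring⟩ :=
  ext_coord fun s => by
    rw [coord_f, coord_single, coord_single]
    dsimp only
    split_ifs <;> first | rfl | omega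

theorem f_single_last {t : ℕ} (ht : t + 1 = ℓ) (h : i + t = v) :
    (stdRep n i ℓ).f v (single ⟨⟨t, by omega⟩, h⟩) = 0 :=
  ext_coord fun s => by
    rw [coord_f, coord_single, map_zero]
    dsimp only
    split_ifs <;> first | rfl | omega

variable (i) in
noncomputable def evalGen (hℓ : 0 < ℓ) (W : CycRep n) :
    (stdRep n i ℓ).homSubmodule W →ₗ[ℂ] W.V i where
  toFun φ := φ.1 i (gen hℓ)
  map_add' _ _ := rfl
  map_smul' _ _ := rfl

theorem evalGen_injective (hℓ : 0 < ℓ) (W : CycRep n) :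
    Function.Injective (evalGen i hℓ W) := by
  rw [injective_iff_map_eq_zero]
  rintro ⟨φ, hφ⟩ h0
  have hsingle : ∀ t (ht : t < ℓ) v (h : i + t = v), φ v (single ⟨⟨t, ht⟩, h⟩) = 0 := by
    intro t
    induction t with
    | zero =>
      intro ht v h
      obtain rfl : i = v := by simpa using h
      exact h0
    | succ t ih =>
      intro ht v h
      obtain rfl : i + t + 1 = v := by rw [← h]; push_cast; ring
      rw [← f_single_of_lt ht, ← CycRep.f_apply_of_mem_homSubmodule hφ, ih (by omega) _ rfl,
        map_zero]
  refine Subtype.ext (funext fun v => (basis i ℓ v).ext fun t => ?_)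
  rw [ZeroMemClass.coe_zero, Pi.zero_apply, LinearMap.zero_apply, basis_apply]
  exact hsingle t.1.1 t.1.2 v t.2

section Hom

variable {j : ZMod n} {k : ℕ}

theorem coord_add_apply_single (hℓ : 0 < ℓ) {φ : ∀ v, (stdRep n i ℓ).V v →ₗ[ℂ] (stdRep n j k).V v}
    (hφ : φ ∈ (stdRep n i ℓ).homSubmodule (stdRep n j k)) (s : ℕ) :
    ∀ t (ht : t < ℓ) v (h : i + t = v), s + t < k →
      coord (s + t) (φ v (single ⟨⟨t, ht⟩, h⟩)) = coord s (φ i (gen hℓ)) := by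
  intro t
  induction t with
  | zero =>
    intro ht v h _
    obtain rfl : i = v := by simpa using h
    rfl
  | succ t ih =>
    intro ht v h hst
    obtain rfl : i + t + 1 = v := by rw [← h]; push_cast; ring
    rw [← f_single_of_lt ht, ← CycRep.f_apply_of_mem_homSubmodule hφ, coord_f, if_pos (by omega),
      ← ih (by omega) _ rfl (by omega)]
    rfl

theorem coord_apply_gen_eq_zero (hℓ : 0 < ℓ) {φ : ∀ v, (stdRep n i ℓ).V v →ₗ[ℂ] (stdRep n j k).V v}
    (hφ : φ ∈ (stdRep n i ℓ).homSubmodule (stdRep n j k)) {s : ℕ} (hs : s + ℓ < k) :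
    coord s (φ i (gen hℓ)) = 0 := by
  have hlast : ℓ - 1 < ℓ := by omega
  calc coord s (φ i (gen hℓ))
      = coord (s + (ℓ - 1)) (φ _ (single ⟨⟨ℓ - 1, hlast⟩, rfl⟩)) :=
        (coord_add_apply_single hℓ hφ s _ hlast _ rfl (by omega)).symm
    _ = coord (s + (ℓ - 1) + 1) ((stdRep n j k).f _ (φ _ (single ⟨⟨ℓ - 1, hlast⟩, rfl⟩))) := by
        rw [coord_f, if_pos (by omega)]; rfl
    _ = 0 := by
        rw [CycRep.f_apply_of_mem_homSubmodule hφ, f_single_last (by omega), map_zero, map_zero]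

variable (i ℓ j k) in
/-- `b_t ↦ b'_{t+d}`, where `b'` is the basis of `U_j(k)` and `b'_s = 0` for `s ≥ k`. -/
noncomputable def shiftMap (d : ℕ) (v : ZMod n) : (stdRep n i ℓ).V v →ₗ[ℂ] (stdRep n j k).V v :=
  LinearMap.pi fun s => if d ≤ s.1.1 then coord (s.1.1 - d) else 0

theorem coord_shiftMap {d : ℕ} (hd : j + d = i) (s : ℕ) (g : (stdRep n i ℓ).V v) :
    coord s (shiftMap i ℓ j k d v g) = if d ≤ s ∧ s < k then coord (s - d) g else 0 := by
  rw [coord_apply]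
  by_cases hs : s < k ∧ j + s = v
  · rw [dif_pos hs]
    show (if d ≤ s then coord (s - d) else (0 : _ →ₗ[ℂ] ℂ)) g = _
    by_cases hds : d ≤ s <;> simp [hds, hs.1]
  · rw [dif_neg hs, eq_comm, ite_eq_right_iff]
    rintro ⟨hds, hsk⟩
    rw [coord_apply, dif_neg]
    rintro ⟨-, h⟩
    exact hs ⟨hsk, by rw [← h, ← hd, Nat.cast_sub hds]; ring⟩

variable (i ℓ j k) in
noncomputable def shiftHom (d : ℕ) (hd : j + d = i) (hdk : k ≤ d + ℓ) :
    (stdRep n i ℓ).homSubmodule (stdRep n j k) :=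
  ⟨shiftMap i ℓ j k d, fun v => LinearMap.ext fun g => ext_coord fun s => by
    simp only [LinearMap.comp_apply]
    rw [coord_f, coord_shiftMap hd, coord_shiftMap hd, coord_f]
    split_ifs <;> first | rfl | omega | rw [Nat.sub_right_comm]⟩

variable (i ℓ j k) in
/-- The coordinates of `φ_i(b₀)` that `f^ℓ b₀ = 0` does not force to vanish. -/
abbrev FreeIndex : Type := {s : Fin k // j + s = i ∧ k ≤ s + ℓ}

variable (i j k) in
noncomputable def genCoeffs (hℓ : 0 < ℓ) :
    (stdRep n i ℓ).homSubmodule (stdRep n j k) →ₗ[ℂ] (FreeIndex i ℓ j k → ℂ) :=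
  LinearMap.funLeft ℂ ℂ (fun r => ⟨r.1, r.2.1⟩) ∘ₗ evalGen i hℓ (stdRep n j k)

theorem genCoeffs_injective (hℓ : 0 < ℓ) : Function.Injective (genCoeffs i j k hℓ) := by
  rw [injective_iff_map_eq_zero]
  rintro ⟨φ, hφ⟩ h0
  have hgen : evalGen i hℓ (stdRep n j k) ⟨φ, hφ⟩ = 0 := funext fun s => by
    by_cases hs : k ≤ s.1.1 + ℓ
    · exact congrFun h0 ⟨s.1, s.2, hs⟩
    · exact (coord_val _ s).symm.trans (coord_apply_gen_eq_zero hℓ hφ (by omega))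
  exact evalGen_injective hℓ _ (hgen.trans (map_zero _).symm)

theorem genCoeffs_shiftHom (hℓ : 0 < ℓ) (r : FreeIndex i ℓ j k) :
    genCoeffs i j k hℓ (shiftHom i ℓ j k r.1.1 r.2.1 r.2.2) = Pi.single r 1 := by
  funext r'
  have hcoord := coord_val (shiftMap i ℓ j k r.1.1 i (gen hℓ)) ⟨r'.1, r'.2.1⟩
  simp only [coord_shiftMap r.2.1, coord_gen] at hcoord
  rw [Pi.single_apply]
  simp only [Subtype.ext_iff, Fin.ext_iff]
  split_ifs at hcoord ⊢ <;> first | exact hcoord.symm | omega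

theorem genCoeffs_surjective (hℓ : 0 < ℓ) : Function.Surjective (genCoeffs i j k hℓ) := by
  rw [← LinearMap.range_eq_top, eq_top_iff, ← (Pi.basisFun ℂ _).span_eq, Submodule.span_le]
  rintro _ ⟨r, rfl⟩
  exact ⟨_, (genCoeffs_shiftHom hℓ r).trans (Pi.basisFun_apply ℂ _ r).symm⟩

theorem card_freeIndex :
    Fintype.card (FreeIndex i ℓ j k) =
      (Finset.univ.filter
        fun t : Fin (min ℓ k) => i + (t.1 : ZMod n) = j + (k : ZMod n) - 1).card := by
  rw [← Fintype.card_subtype]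
  exact Fintype.card_congr
    { toFun r := ⟨⟨k - 1 - r.1, by omega⟩, by
        rw [Nat.cast_pred_sub r.1.2]; linear_combination -r.2.1⟩
      invFun t := ⟨⟨k - 1 - t.1, by omega⟩, by
        rw [Nat.cast_pred_sub (by omega)]; linear_combination -t.2, by dsimp only; omega⟩
      left_inv r := by ext; simp only; omega
      right_inv t := by ext; simp only; omega }

end Hom

end stdRep

theorem hom_dim_indecomposables_general (n : ℕ) (i j : ZMod n) (ℓ k : ℕ)
    (hℓ : 0 < ℓ) :
    (stdRep n i ℓ).homDim (stdRep n j k) =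
      (Finset.univ.filter
        fun t : Fin (min ℓ k) => i + (t.1 : ZMod n) = j + (k : ZMod n) - 1).card := by
  rw [CycRep.homDim, (LinearEquiv.ofBijective _ ⟨stdRep.genCoeffs_injective hℓ,
    stdRep.genCoeffs_surjective hℓ⟩).finrank_eq, Module.finrank_fintype_fun_eq_card,
    stdRep.card_freeIndex]

/-- Hubery's formula: `dim Hom(U_i(ℓ), U_j(k))` equals the number of occurrences of the
residue `j + k - 1` among the residues `i, i+1, …, i+m-1` where `m = min ℓ k`. -/
theorem hom_dim_indecomposables (n : ℕ) [NeZero n] (i j : ZMod n) (ℓ k : ℕ)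
    (hℓ : 0 < ℓ) (hk : 0 < k) :
    (stdRep n i ℓ).homDim (stdRep n j k) =
      (Finset.univ.filter
        fun t : Fin (min ℓ k) => i + (t.1 : ZMod n) = j + (k : ZMod n) - 1).card :=
  hom_dim_indecomposables_general n i j ℓ k hℓ
end

section
/- Let M be any nilpotent representation of the equioriented cycle Δ_n satisfying the relations that all paths of length N act as zero, with dimension vector e. Then for every vertex i ∈ ℤ/nℤ, the dimension of Hom(M, U_i(N)) equals e_{i+N-1}, the entry of the dimension vector of M at vertex i+N-1 (mod n). -/
open Module

/-!
A morphism `φ : M → U_i(N)` is determined by the linear form `μ` it induces on `M_{i+N-1}` by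
taking the `b_{N-1}`-coordinate: commuting with the arrows forces the `b_t`-coordinate of `φ` at
vertex `j` to be `μ` composed with the path of length `N-1-t` from `j` to `i+N-1`. Conversely
these formulas define a morphism for every `μ`, the only constraint (at `b_0`) being that paths of
length `N` act as zero on `M`. Hence `Hom(M, U_i(N))` is the dual of `M_{i+N-1}`.
-/

namespace CycRep

variable {n : ℕ} (M : CycRep n)

@[simp]
lemma castV_castV {a b c : ZMod n} (h₁ : a = b) (h₂ : b = c) (x : M.V a) :
    M.castV h₂ (M.castV h₁ x) = M.castV (h₁.trans h₂) x := by
  subst h₁ h₂; rfl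

/-- `pathMap` with its target vertex named freely, so that it can be rewritten along
equalities of path lengths. -/
noncomputable def pathMapTo (k : ℕ) {j j' : ZMod n} (h : j + (k : ZMod n) = j') :
    M.V j →ₗ[ℂ] M.V j' :=
  M.castV h ∘ₗ M.pathMap k j

lemma pathMapTo_of_eq_zero {k : ℕ} (hk : k = 0) {j j' : ZMod n} (h : j + (k : ZMod n) = j')
    (hj : j = j') (m : M.V j) : M.pathMapTo k h m = M.castV hj m := by
  subst hk hj; simp [pathMapTo, pathMap]

lemma pathMapTo_of_eq_succ {k k' : ℕ} (hk : k = k' + 1) {j j' : ZMod n}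
    (h : j + (k : ZMod n) = j') (h' : j + 1 + (k' : ZMod n) = j') (m : M.V j) :
    M.pathMapTo k h m = M.pathMapTo k' h' (M.f j m) := by
  subst hk; simp [pathMapTo, pathMap]

lemma pathMapTo_eq_zero_of_pathMap_eq_zero {k : ℕ} {j j' : ZMod n} (h : j + (k : ZMod n) = j')
    (hk : M.pathMap k j = 0) : M.pathMapTo k h = 0 := by
  simp [pathMapTo, hk]

end CycRep

namespace stdRep

variable {n : ℕ} {i : ZMod n} {ℓ : ℕ}

lemma f_apply_zero (j : ZMod n) (g : (stdRep n i ℓ).V j) (h : 0 < ℓ)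
    (hs : i + ((0 : ℕ) : ZMod n) = j + 1) : (stdRep n i ℓ).f j g ⟨⟨0, h⟩, hs⟩ = 0 :=
  rfl

lemma f_apply_succ (j : ZMod n) (g : (stdRep n i ℓ).V j) {t : ℕ} (h : t + 1 < ℓ)
    (hs : i + ((t + 1 : ℕ) : ZMod n) = j + 1) :
    (stdRep n i ℓ).f j g ⟨⟨t + 1, h⟩, hs⟩ =
      g ⟨⟨t, by omega⟩, by push_cast at hs; linear_combination hs⟩ :=
  rfl

/-- The basis vector `b_ℓ` of `U_i(ℓ+1)`, which lies over vertex `i + ℓ`. -/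
def top (i : ZMod n) (ℓ : ℕ) : {t : Fin (ℓ + 1) // i + (t.1 : ZMod n) = i + ℓ} :=
  ⟨Fin.last ℓ, rfl⟩

end stdRep

namespace CycRep

variable {n : ℕ} (M : CycRep n) (i : ZMod n) (ℓ : ℕ)

noncomputable def topCoord : M.homSubmodule (stdRep n i (ℓ + 1)) →ₗ[ℂ] Dual ℂ (M.V (i + ℓ)) :=
  LinearMap.compRight ℂ (LinearMap.proj (stdRep.top i ℓ)) ∘ₗ LinearMap.proj (i + ℓ) ∘ₗ
    Submodule.subtype _

variable {M i ℓ}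

lemma hom_apply_eq_topCoord (φ : M.homSubmodule (stdRep n i (ℓ + 1))) {j : ZMod n} (m : M.V j)
    {t k : ℕ} (ht : t + k = ℓ) (hs : i + (t : ZMod n) = j) (h : j + (k : ZMod n) = i + ℓ) :
    φ.1 j m ⟨⟨t, by omega⟩, hs⟩ = M.topCoord i ℓ φ (M.pathMapTo k h m) := by
  induction k generalizing j t with
  | zero =>
    subst ht hs
    rw [M.pathMapTo_of_eq_zero rfl h rfl]
    rfl
  | succ k ih =>
    have hs' : i + ((t + 1 : ℕ) : ZMod n) = j + 1 := by push_cast; rw [← hs]; ring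
    have h' : j + 1 + (k : ZMod n) = i + ℓ := by rw [← h]; push_cast; ring
    calc φ.1 j m ⟨⟨t, _⟩, hs⟩
        = (stdRep n i (ℓ + 1)).f j (φ.1 j m) ⟨⟨t + 1, by omega⟩, hs'⟩ :=
          (stdRep.f_apply_succ j _ _ hs').symm
      _ = φ.1 (j + 1) (M.f j m) ⟨⟨t + 1, by omega⟩, hs'⟩ :=
          congrFun (LinearMap.congr_fun (φ.2 j) m) ⟨⟨t + 1, by omega⟩, hs'⟩
      _ = M.topCoord i ℓ φ (M.pathMapTo k h' (M.f j m)) := ih (M.f j m) (by omega) hs' h'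
      _ = M.topCoord i ℓ φ (M.pathMapTo (k + 1) h m) := by
          rw [M.pathMapTo_of_eq_succ rfl h h']

lemma add_sub_index_eq {j : ZMod n} (s : {t : Fin (ℓ + 1) // i + (t.1 : ZMod n) = j}) :
    j + ((ℓ - s.1.1 : ℕ) : ZMod n) = i + ℓ := by
  obtain ⟨⟨t, ht⟩, rfl⟩ := s
  dsimp only
  rw [Nat.cast_sub (by omega)]; ring

lemma topCoord_injective : Function.Injective (M.topCoord i ℓ) := by
  rw [← LinearMap.ker_eq_bot, LinearMap.ker_eq_bot']
  intro φ hφ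
  ext j m : 3
  funext ⟨⟨t, ht⟩, hs⟩
  rw [hom_apply_eq_topCoord φ m (t := t) (k := ℓ - t) (by omega) hs (add_sub_index_eq ⟨⟨t, ht⟩, hs⟩), hφ]
  rfl

noncomputable def homOfDual (hnil : ∀ j, M.pathMap (ℓ + 1) j = 0) (μ : Dual ℂ (M.V (i + ℓ))) :
    M.homSubmodule (stdRep n i (ℓ + 1)) where
  val j := LinearMap.pi fun s => μ ∘ₗ M.pathMapTo (ℓ - s.1.1) (add_sub_index_eq s)
  property j := by
    ext m : 1
    funext ⟨⟨t, ht⟩, hs⟩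
    change (stdRep n i (ℓ + 1)).f j _ _ = μ (M.pathMapTo _ _ (M.f j m))
    cases t with
    | zero =>
      have h : j + ((ℓ + 1 : ℕ) : ZMod n) = i + ℓ := by
        push_cast at hs ⊢; linear_combination -hs
      rw [stdRep.f_apply_zero, ← M.pathMapTo_of_eq_succ (by dsimp only; omega) h,
        M.pathMapTo_eq_zero_of_pathMap_eq_zero h (hnil j), LinearMap.zero_apply, map_zero]
    | succ t =>
      rw [stdRep.f_apply_succ]
      exact congrArg μ (M.pathMapTo_of_eq_succ (by dsimp only; omega) _ _ m)

lemma topCoord_homOfDual (hnil : ∀ j, M.pathMap (ℓ + 1) j = 0) (μ : Dual ℂ (M.V (i + ℓ))) :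
    M.topCoord i ℓ (homOfDual hnil μ) = μ := by
  ext m
  exact congrArg μ (M.pathMapTo_of_eq_zero (Nat.sub_self ℓ) _ rfl m)

noncomputable def homEquivDual (hnil : ∀ j, M.pathMap (ℓ + 1) j = 0) :
    M.homSubmodule (stdRep n i (ℓ + 1)) ≃ₗ[ℂ] Dual ℂ (M.V (i + ℓ)) :=
  .ofBijective (M.topCoord i ℓ)
    ⟨topCoord_injective, fun μ => ⟨homOfDual hnil μ, topCoord_homOfDual hnil μ⟩⟩

lemma homDim_stdRep_succ (hnil : ∀ j, M.pathMap (ℓ + 1) j = 0) :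
    M.homDim (stdRep n i (ℓ + 1)) = M.dimVec (i + ℓ) := by
  rw [homDim, (homEquivDual hnil).finrank_eq, Subspace.dual_finrank_eq, dimVec]

end CycRep

theorem hom_dim_to_max_indecomposable_general (n N : ℕ) (hN : 0 < N) (M : CycRep n)
    (hnil : ∀ j, M.pathMap N j = 0) (i : ZMod n) :
    M.homDim (stdRep n i N) = M.dimVec (i + (N : ZMod n) - 1) := by
  obtain ⟨ℓ, rfl⟩ : ∃ ℓ, N = ℓ + 1 := ⟨N - 1, by omega⟩
  have hvertex : i + ((ℓ + 1 : ℕ) : ZMod n) - 1 = i + ℓ := by push_cast; ring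
  rw [hvertex, CycRep.homDim_stdRep_succ hnil]

/-- For any nilpotent representation `M` of the cycle bounded by `N` (all paths of length `N`
act as zero), `dim Hom(M, U_i(N))` equals the entry of the dimension vector of `M` at
vertex `i + N - 1`. -/
theorem hom_dim_to_max_indecomposable (n N : ℕ) [NeZero n] (hN : 0 < N) (M : CycRep n)
    [∀ j, FiniteDimensional ℂ (M.V j)]
    (hnil : ∀ j, M.pathMap N j = 0) (i : ZMod n) :
    M.homDim (stdRep n i N) = M.dimVec (i + (N : ZMod n) - 1) :=
  hom_dim_to_max_indecomposable_general n N hN M hnil i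
end

section
/- Let ω, n be positive integers and let M_ω be the representation of the cyclic quiver Δ_n with vector space ℂ^{2ωn} at every vertex and with each arrow map equal to s_1 ∘ pr_{ωn}, where pr_{ωn} kills the ωn-th standard basis vector and s_1 shifts basis vector e_j to e_{j+1} (and e_{2ωn} to 0). Then M_ω is isomorphic, as a Δ_n-representation, to ⊕_{j∈ℤ/nℤ} U(j; ωn) ⊗ ℂ². -/
open Module

/-- The representation `M_ω` of `Δ_n`: the space `ℂ^{2ωn}` at every vertex, every arrow acting
by `s_1 ∘ pr_{ωn}` (kill the `ωn`-th basis vector, then shift indices up by one). -/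
noncomputable def flagRep (n ω : ℕ) : CycRep n where
  V _ := Fin (2 * ω * n) → ℂ
  f _ :=
    { toFun := fun g s =>
        if h : s.1 ≠ 0 ∧ s.1 ≠ ω * n then g ⟨s.1 - 1, by have := s.isLt; omega⟩ else 0
      map_add' := by
        intro a b
        funext s
        by_cases h : s.1 ≠ 0 ∧ s.1 ≠ ω * n <;> simp [h]
      map_smul' := by
        intro c a
        funext s
        by_cases h : s.1 ≠ 0 ∧ s.1 ≠ ω * n <;> simp [h] }

/-! The arrow `s_1 ∘ pr_{ωn}` acts on `ℂ^{2ωn} = ℂ^{ωn} ⊕ ℂ^{ωn}` as a nilpotent Jordan block on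
each half, so `M_ω` is two copies of the representation `J_ℓ` (`ℓ = ωn`) with `ℂ^ℓ` at every
vertex and the Jordan block on every arrow. Over a vertex `j`, the basis vectors `b_t` of the
summands of `⊕_a U(a; ℓ)` are indexed by `t < ℓ` alone: `b_t` lies in the summand ending at
`a = j + ℓ - 1 - t`. Collecting them identifies `⊕_a U(a; ℓ)` with `J_ℓ`, and the arrows match. -/

theorem CycRep.Iso.trans {n : ℕ} {U₁ U₂ U₃ : CycRep n} (h₁₂ : U₁.Iso U₂) (h₂₃ : U₂.Iso U₃) :
    U₁.Iso U₃ := by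
  obtain ⟨φ, hφ⟩ := h₁₂
  obtain ⟨ψ, hψ⟩ := h₂₃
  exact ⟨fun i => (φ i).trans (ψ i), fun i v => by simp [hφ, hψ]⟩

theorem apply_subtype_congr {α β γ : Type*} {P : α → β → Prop} (h : ∀ a, {t // P a t} → γ)
    {a a' : α} {t t' : β} (ha : a = a') (ht : t = t') (H : P a t) (H' : P a' t') :
    h a ⟨t, H⟩ = h a' ⟨t', H'⟩ := by
  subst ha ht
  rfl

noncomputable def shiftRep (n ℓ : ℕ) : CycRep n where
  V _ := Fin ℓ → ℂ
  f _ :=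
    { toFun := fun g t => if t.1 ≠ 0 then g ⟨t.1 - 1, by omega⟩ else 0
      map_add' := by
        intro a b
        funext t
        by_cases h : t.1 = 0 <;> simp [h]
      map_smul' := by
        intro c a
        funext t
        by_cases h : t.1 = 0 <;> simp [h] }

theorem shiftRep_f_apply (n ℓ : ℕ) (i : ZMod n) (g : Fin ℓ → ℂ) (t : Fin ℓ) :
    (shiftRep n ℓ).f i g t = if t.1 ≠ 0 then g ⟨t.1 - 1, by omega⟩ else 0 :=
  rfl

theorem flagRep_f_apply (n ω : ℕ) (i : ZMod n) (g : Fin (2 * ω * n) → ℂ) (s : Fin (2 * ω * n)) :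
    (flagRep n ω).f i g s = if s.1 ≠ 0 ∧ s.1 ≠ ω * n then g ⟨s.1 - 1, by omega⟩ else 0 :=
  rfl

theorem flagRep_iso_dSum_shiftRep (n ω : ℕ) :
    (flagRep n ω).Iso (CycRep.dSum fun _ : Fin 2 => shiftRep n (ω * n)) := by
  let e : Fin 2 × Fin (ω * n) ≃ Fin (2 * ω * n) :=
    finProdFinEquiv.trans (finCongr (by ring))
  refine ⟨fun _ => (LinearEquiv.funCongrLeft ℂ ℂ e).trans (LinearEquiv.curry ℂ ℂ _ _), ?_⟩
  intro i v
  funext b t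
  change (flagRep n ω).f i v (e (b, t)) = (shiftRep n (ω * n)).f i (fun s => v (e (b, s))) t
  refine (flagRep_f_apply n ω i v _).trans (Eq.trans ?_ (shiftRep_f_apply n _ i _ t).symm)
  have hb : ω * n * b.1 = 0 ∨ ω * n * b.1 = ω * n := by
    rcases Fin.exists_fin_two.mp ⟨b, rfl⟩ with rfl | rfl <;> simp
  simp only [e, Equiv.trans_apply, finProdFinEquiv_apply_val, finCongr_apply, Fin.val_cast]
  by_cases ht : t.1 = 0
  · rw [if_neg (by omega), if_neg (by omega)]
  · rw [if_pos (by omega), if_pos ht]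
    exact congrArg v (Fin.ext (by simp; omega))

noncomputable def dSumShiftRepEquiv (n ℓ : ℕ) (ι : Type) (j : ZMod n) :
    (CycRep.dSum fun _ : ι => shiftRep n ℓ).V j ≃ₗ[ℂ]
      (CycRep.dSum fun p : ZMod n × ι => endRep n ℓ p.1).V j where
  toFun g p s := g p.2 s.1
  invFun h b t := h (j + ℓ - 1 - t, b) ⟨t, by ring⟩
  map_add' _ _ := rfl
  map_smul' _ _ := rfl
  left_inv _ := rfl
  right_inv h := by
    funext p s
    exact apply_subtype_congr (P := fun p (t : Fin ℓ) => p.1 - (ℓ : ZMod n) + 1 + (t.1 : ZMod n) = j)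
      h (a := (j + ℓ - 1 - (s.1 : ℕ), p.2)) (a' := p) (Prod.ext (by linear_combination -s.2) rfl)
      rfl _ _

theorem dSum_shiftRep_iso_dSum_endRep (n ℓ : ℕ) (ι : Type) :
    (CycRep.dSum fun _ : ι => shiftRep n ℓ).Iso
      (CycRep.dSum fun p : ZMod n × ι => endRep n ℓ p.1) :=
  ⟨dSumShiftRepEquiv n ℓ ι, fun _ _ => rfl⟩

theorem flagRep_iso_general (n ω : ℕ) :
    (flagRep n ω).Iso
      (CycRep.dSum fun p : ZMod n × Fin 2 => endRep n (ω * n) p.1) :=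
  (flagRep_iso_dSum_shiftRep n ω).trans (dSum_shiftRep_iso_dSum_endRep n (ω * n) (Fin 2))

/-- `M_ω ≅ ⊕_{j ∈ ℤ/n} U(j; ωn) ⊗ ℂ²`. -/
theorem flagRep_iso (n ω : ℕ) [NeZero n] (hω : 0 < ω) :
    (flagRep n ω).Iso
      (CycRep.dSum fun p : ZMod n × Fin 2 => endRep n (ω * n) p.1) :=
  flagRep_iso_general n ω
end
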